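/- Let a1, a2, a3 ∈ (0, 1/2). If nonnegative reals x1, x2, x3 satisfy system (S) and at least one of x1, x2, x3 equals zero, then x1 = x2 = x3 = 0. In other words, for such parameters system (S) has no nonzero nonnegative solution with a vanishing component. -/
import Mathlib


noncomputable section
open Real Set

/-- First equation of system (S). -/
def eqS1 (a1 a2 a3 x1 x2 x3 : ℝ) : Prop :=
  (a2 + a3)*(a1*x2^2 + a1*x3^2 - x2*x3) + (a2*x2 + a3*x3)*x1
    - (a1*a2 + a1*a3 + 2*a2*a3)*x1^2 = 0

/-- Second equation of system (S). -/
def eqS2 (a1 a2 a3 x1 x2 x3 : ℝ) : Prop :=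
  (a1 + a3)*(a2*x1^2 + a2*x3^2 - x1*x3) + (a1*x1 + a3*x3)*x2
    - (a1*a2 + 2*a1*a3 + a2*a3)*x2^2 = 0

/-- Key lemma: if `a*u² + a*v² = u*v` with `0 < a < 1/2` and additionally
`S*(v² - u²) = 0` with `S > 0`, then `u = v = 0` for nonnegative `u, v`. -/
lemma key_aux (a S u v : ℝ) (ha : 0 < a) (ha' : a < 1/2) (hS : 0 < S)
    (hu : 0 ≤ u) (hv : 0 ≤ v)
    (hA : a*u^2 + a*v^2 - u*v = 0) (hsq : S*(v^2 - u^2) = 0) : u = 0 ∧ v = 0 := by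
  have hvu : v^2 - u^2 = 0 := by
    rcases mul_eq_zero.mp hsq with h | h
    · exact absurd h (ne_of_gt hS)
    · exact h
  have hfac : (u - v) * (u + v) = 0 := by ring_nf; nlinarith [hvu]
  rcases mul_eq_zero.mp hfac with h | h
  · -- u = v
    have huv : u = v := by linarith
    have h2 : (1 - 2*a) * u^2 = 0 := by
      rw [huv] at hA ⊢; nlinarith [hA]
    have : u^2 = 0 := by
      rcases mul_eq_zero.mp h2 with h' | h'
      · linarith
      · exact h'
    have hu0 : u = 0 := by nlinarith [this]
    exact ⟨hu0, by rw [← huv]; exact hu0⟩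
  · constructor <;> linarith

theorem no_solution_with_zero_component (a1 a2 a3 : ℝ)
    (ha1 : a1 ∈ Ioo (0:ℝ) (1/2)) (ha2 : a2 ∈ Ioo (0:ℝ) (1/2)) (ha3 : a3 ∈ Ioo (0:ℝ) (1/2))
    (x1 x2 x3 : ℝ) (hx1 : 0 ≤ x1) (hx2 : 0 ≤ x2) (hx3 : 0 ≤ x3)
    (hS1 : eqS1 a1 a2 a3 x1 x2 x3) (hS2 : eqS2 a1 a2 a3 x1 x2 x3)
    (hzero : x1 = 0 ∨ x2 = 0 ∨ x3 = 0) :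
    x1 = 0 ∧ x2 = 0 ∧ x3 = 0 := by
  obtain ⟨h1, h1'⟩ := ha1
  obtain ⟨h2, h2'⟩ := ha2
  obtain ⟨h3, h3'⟩ := ha3
  unfold eqS1 at hS1
  unfold eqS2 at hS2
  have hSpos : 0 < a1*a2 + a1*a3 + a2*a3 := by positivity
  rcases hzero with h0 | h0 | h0
  · subst h0
    -- eq1 gives a1*(x2²+x3²) = x2*x3
    have hA : a1*x2^2 + a1*x3^2 - x2*x3 = 0 := by
      have h23 : 0 < a2 + a3 := by linarith
      have : (a2 + a3) * (a1*x2^2 + a1*x3^2 - x2*x3) = 0 := by linarith [hS1]; 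
      rcases mul_eq_zero.mp this with h | h
      · exact absurd h (ne_of_gt h23)
      · exact h
    have hsq : (a1*a2 + a1*a3 + a2*a3)*(x3^2 - x2^2) = 0 := by
      linear_combination hS2 + a3 * hA
    obtain ⟨hu, hv⟩ := key_aux a1 (a1*a2 + a1*a3 + a2*a3) x2 x3 h1 h1' hSpos hx2 hx3 hA hsq
    exact ⟨rfl, hu, hv⟩
  · subst h0
    have hB : a2*x1^2 + a2*x3^2 - x1*x3 = 0 := by
      have h13 : 0 < a1 + a3 := by linarith
      have : (a1 + a3) * (a2*x1^2 + a2*x3^2 - x1*x3) = 0 := by linarith [hS2]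
      rcases mul_eq_zero.mp this with h | h
      · exact absurd h (ne_of_gt h13)
      · exact h
    have hsq : (a1*a2 + a1*a3 + a2*a3)*(x3^2 - x1^2) = 0 := by
      linear_combination hS1 + a3 * hB
    obtain ⟨hu, hv⟩ := key_aux a2 (a1*a2 + a1*a3 + a2*a3) x1 x3 h2 h2' hSpos hx1 hx3 hB hsq
    exact ⟨hu, rfl, hv⟩
  · subst h0
    -- sum of equations gives x1*x2 = a3*(x1²+x2²)
    have hC : a3*x1^2 + a3*x2^2 - x1*x2 = 0 := by
      have h12 : 0 < a1 + a2 := by linarith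
      have : (a1 + a2) * (a3*x1^2 + a3*x2^2 - x1*x2) = 0 := by
        linear_combination -hS1 - hS2
      rcases mul_eq_zero.mp this with h | h
      · exact absurd h (ne_of_gt h12)
      · exact h
    have hsq : (a1*a2 + a1*a3 + a2*a3)*(x2^2 - x1^2) = 0 := by
      linear_combination hS1 + a2 * hC
    obtain ⟨hu, hv⟩ := key_aux a3 (a1*a2 + a1*a3 + a2*a3) x1 x2 h3 h3' hSpos hx1 hx2 hC hsq
    exact ⟨hu, hv, rfl⟩
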